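/- If (≿, c) has a D-monotone justifiability representation, then c satisfies Irrelevance of Submaximal Alternatives (ISA): for any finite menu B and any A ⊆ S(B), c(B) = c(B \ A), where S(B) is the set of b ∈ B that are either strictly dominated by some b' ∈ B (b' ≻_D b) or excluded by some subset B' ⊂ B (meaning b ≿ x for all x ∈ c(B' ∪ {b}) and b ∉ c(B' ∪ {b})). -/

import Mathlib

open Finset

/-- A total (weak) order: complete, transitive, antisymmetric. -/
def TotalOrderRel {α : Type*} (r : α → α → Prop) : Prop :=
  (∀ a b : α, r a b ∨ r b a) ∧ Transitive r ∧ ∀ a b : α, r a b → r b a → a = b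

/-- The set of `r`-maximal elements of a set `S`. -/
def argmaxOn {α : Type*} (r : α → α → Prop) (S : Set α) : Set α :=
  {x ∈ S | ∀ y ∈ S, r x y}

/-- The justifiable set `M(A)`: union over justifications of their maximizers on `A`. -/
def justSet {α : Type*} (M : Set (α → α → Prop)) (A : Finset α) : Set α :=
  ⋃ r ∈ M, argmaxOn r (A : Set α)

/-- A justifiability representation for `(pref, c)`. -/
def JustRep {α : Type*} (pref : α → α → Prop) (c : Finset α → Finset α)
    (M : Set (α → α → Prop)) : Prop :=
  M.Nonempty ∧ (∀ r ∈ M, TotalOrderRel r) ∧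
    ∀ A : Finset α, A.Nonempty → (c A : Set α) = argmaxOn pref (justSet M A)

/-- Irrelevance of Unjustifiable Alternatives. -/
def IUA {α : Type*} [DecidableEq α] (pref : α → α → Prop)
    (c : Finset α → Finset α) : Prop :=
  ∀ (A : Finset α) (a : α), a ∈ A → (∀ b ∈ c A, pref a b) → a ∉ c A →
    ∀ B : Finset α, A ⊆ B → c (B.erase a) = c B

/-- Optimization: all chosen elements are indifferent. -/
def Optimization {α : Type*} (pref : α → α → Prop) (c : Finset α → Finset α) : Prop :=
  ∀ A : Finset α, A.Nonempty → ∀ a ∈ c A, ∀ b ∈ c A, pref a b ∧ pref b a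

/-- `A` excludes `b` from below: `b ∉ c(A ∪ {b})` and `b ≿ a` for all `a ∈ A`. -/
def ExclBelow {α : Type*} [DecidableEq α] (pref : α → α → Prop)
    (c : Finset α → Finset α) (A : Finset α) (b : α) : Prop :=
  b ∉ c (insert b A) ∧ ∀ x ∈ A, pref b x

/-!
No alternative of `A` is a maximizer on `B` of any justification in `M`. A dominated one loses
to its dominator under every strictly D-monotone order. An excluded one, if some justification
maximized it on `B`, would be justifiable in `insert b B'` and weakly preferred to everything
chosen there, hence chosen itself. Deleting alternatives that no justification maximizes leaves
every justification's maximizers, hence the justifiable set and the choice, unchanged.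
-/

section Argmax

variable {α : Type*} {r : α → α → Prop}

lemma argmaxOn_nonempty_of_total (htot : ∀ a b, r a b ∨ r b a) (htr : Transitive r)
    {S : Finset α} (hS : S.Nonempty) : (argmaxOn r (S : Set α)).Nonempty := by
  induction hS using Finset.Nonempty.cons_induction with
  | singleton a => exact ⟨a, by simpa [argmaxOn] using (htot a a).elim id id⟩
  | cons a s _ _ ih =>
    obtain ⟨x, hxs, hxmax⟩ := ih
    rcases htot a x with hax | hxa
    · refine ⟨a, by simp, ?_⟩
      simp only [Finset.coe_cons, Set.mem_insert_iff, forall_eq_or_imp]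
      exact ⟨(htot a a).elim id id, fun y hy => htr hax (hxmax y hy)⟩
    · refine ⟨x, by simp [hxs], ?_⟩
      simp only [Finset.coe_cons, Set.mem_insert_iff, forall_eq_or_imp]
      exact ⟨hxa, hxmax⟩

lemma mem_argmaxOn_of_subset {S T : Set α} (hST : S ⊆ T) {x : α} (hx : x ∈ argmaxOn r T)
    (hxS : x ∈ S) : x ∈ argmaxOn r S :=
  ⟨hxS, fun y hy => hx.2 y (hST hy)⟩

lemma argmaxOn_eq_of_subset (htr : Transitive r) {S T : Set α} (hST : S ⊆ T)
    (hne : (argmaxOn r T).Nonempty) (hmax : argmaxOn r T ⊆ S) :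
    argmaxOn r S = argmaxOn r T := by
  obtain ⟨x, hx⟩ := hne
  refine Set.Subset.antisymm (fun y hy => ⟨hST hy.1, fun z hz => ?_⟩)
    (fun y hy => mem_argmaxOn_of_subset hST hy (hmax hy))
  exact htr (hy.2 x (hmax hx)) (hx.2 z hz)

end Argmax

section Justifiability

variable {α : Type*} {M : Set (α → α → Prop)}

lemma justSet_subset (A : Finset α) : justSet M A ⊆ A := by
  simp only [justSet, Set.iUnion_subset_iff]
  exact fun _ _ _ hx => hx.1

lemma mem_justSet_of_subset {S T : Finset α} (hST : S ⊆ T) {x : α} (hx : x ∈ justSet M T)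
    (hxS : x ∈ S) : x ∈ justSet M S := by
  simp only [justSet, Set.mem_iUnion] at hx ⊢
  obtain ⟨r, hr, hxr⟩ := hx
  exact ⟨r, hr, mem_argmaxOn_of_subset (Finset.coe_subset.mpr hST) hxr hxS⟩

lemma justSet_sdiff_eq [DecidableEq α] (htot : ∀ r ∈ M, TotalOrderRel r) {A B : Finset α}
    (hB : B.Nonempty) (hA : ∀ b ∈ A, b ∉ justSet M B) :
    justSet M (B \ A) = justSet M B := by
  refine Set.iUnion₂_congr fun r hr => ?_
  obtain ⟨hcomp, htr, -⟩ := htot r hr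
  refine argmaxOn_eq_of_subset htr (by simp) (argmaxOn_nonempty_of_total hcomp htr hB)
    fun x hx => Finset.mem_sdiff.mpr ⟨hx.1, fun hxA => hA x hxA ?_⟩
  exact Set.mem_biUnion hr hx

lemma notMem_justSet_of_dominated {D : α → α → Prop}
    (hmono : ∀ r ∈ M, ∀ a b : α, D a b → r a b ∧ ¬ r b a)
    {B : Finset α} {b b' : α} (hb' : b' ∈ B) (hD : D b' b) : b ∉ justSet M B := by
  simp only [justSet, Set.mem_iUnion, not_exists]
  exact fun r hr hb => (hmono r hr b' b hD).2 (hb.2 b' hb')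

lemma notMem_justSet_of_excluded [DecidableEq α] {pref : α → α → Prop}
    {c : Finset α → Finset α} (htrans : Transitive pref)
    (hne : ∀ A : Finset α, A.Nonempty → (c A).Nonempty) (hrep : JustRep pref c M)
    {B B' : Finset α} {b : α} (hB' : insert b B' ⊆ B) (hpref : ∀ x ∈ c (insert b B'), pref b x)
    (hbc : b ∉ c (insert b B')) : b ∉ justSet M B := by
  intro hbB
  have hins : (insert b B').Nonempty := Finset.insert_nonempty b B'
  have hc := hrep.2.2 _ hins
  obtain ⟨a, ha⟩ := hne _ hins
  have ha' : a ∈ argmaxOn pref (justSet M (insert b B')) := hc ▸ ha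
  refine hbc (Finset.mem_coe.mp (hc ▸ ⟨?_, fun y hy => htrans (hpref a ha) (ha'.2 y hy)⟩))
  exact mem_justSet_of_subset hB' hbB (Finset.mem_insert_self b B')

end Justifiability

theorem DMonotone_justRep_ISA_general {α : Type*} [DecidableEq α]
    (D pref : α → α → Prop) (c : Finset α → Finset α)
    (htrans : Transitive pref)
    (hne : ∀ A : Finset α, A.Nonempty → (c A).Nonempty)
    (M : Set (α → α → Prop)) (hrep : JustRep pref c M)
    (hmono : ∀ r ∈ M, ∀ a b : α, D a b → r a b ∧ ¬ r b a) :
    ∀ B A : Finset α,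
      (∀ b ∈ A, b ∈ B ∧
        ((∃ b' ∈ B, D b' b) ∨
          ∃ B' ⊆ B, b ∉ B' ∧ (∀ x ∈ c (insert b B'), pref b x) ∧
            b ∉ c (insert b B'))) →
      c B = c (B \ A) := by
  intro B A hA
  rcases B.eq_empty_or_nonempty with rfl | hB
  · simp
  have hunjust : ∀ b ∈ A, b ∉ justSet M B := by
    intro b hb
    rcases (hA b hb).2 with ⟨b', hb', hD⟩ | ⟨B', hB', -, hpref, hbc⟩
    · exact notMem_justSet_of_dominated hmono hb' hD
    · exact notMem_justSet_of_excluded htrans hne hrep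
        (Finset.insert_subset (hA b hb).1 hB') hpref hbc
  have hJ := justSet_sdiff_eq hrep.2.1 hB hunjust
  have hBA : (B \ A).Nonempty := by
    obtain ⟨x, hx⟩ := hne B hB
    have hxJ : x ∈ justSet M B := (hrep.2.2 B hB ▸ hx : x ∈ argmaxOn pref (justSet M B)).1
    exact ⟨x, Finset.mem_sdiff.mpr ⟨justSet_subset B hxJ, fun hxA => hunjust x hxA hxJ⟩⟩
  apply Finset.coe_injective
  rw [hrep.2.2 B hB, hrep.2.2 _ hBA, hJ]

/-- a D-monotone justifiability representation implies ISA. -/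
theorem DMonotone_justRep_ISA {α : Type*} [DecidableEq α]
    (D pref : α → α → Prop) (c : Finset α → Finset α)
    (hDtrans : Transitive D) (hDasym : ∀ a b : α, D a b → ¬ D b a)
    (hcomp : ∀ a b : α, pref a b ∨ pref b a) (htrans : Transitive pref)
    (hsub : ∀ A : Finset α, c A ⊆ A)
    (hne : ∀ A : Finset α, A.Nonempty → (c A).Nonempty)
    (M : Set (α → α → Prop)) (hrep : JustRep pref c M)
    (hmono : ∀ r ∈ M, ∀ a b : α, D a b → r a b ∧ ¬ r b a) :
    ∀ B A : Finset α,
      (∀ b ∈ A, b ∈ B ∧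
        ((∃ b' ∈ B, D b' b) ∨
          ∃ B' ⊆ B, b ∉ B' ∧ (∀ x ∈ c (insert b B'), pref b x) ∧
            b ∉ c (insert b B'))) →
      c B = c (B \ A) :=
  DMonotone_justRep_ISA_general D pref c htrans hne M hrep hmono
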